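/- For all p ≥ 1 and N ≥ 1: #{(i,j) ∈ ({1,…,N}^p)² : [i]=[j] as multisets} = ∫_{𝕋^N} |a_1 + ⋯ + a_N|^{2p} da, where da is the Haar probability measure on 𝕋^N. -/

import Mathlib

open Finset MeasureTheory

/-- The point `e(u) = exp(2πiu)` of the unit circle. -/
noncomputable def e (u : ℝ) : ℂ := Complex.exp (2 * Real.pi * u * Complex.I)

/-- The cube `[0,1]^N`, parametrizing `𝕋^N` with its Haar probability measure. -/
def Box (N : ℕ) : Set (Fin N → ℝ) := Set.univ.pi fun _ => Set.Icc 0 1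

/-!
Expanding `|∑ₖ aₖ|^{2p} = (∑ₖ aₖ)^p (∑ₖ āₖ)^p` gives one term `∏ₐ a_{i a} ∏ₐ ā_{j a}` for each
pair of multi-indices `(i, j)`, and this term equals `∏ₖ aₖ^{mₖ(i)} āₖ^{mₖ(j)}`, where `mₖ(i)` is
the multiplicity of `k` in `[i]`. By Fubini and the orthogonality `∫_𝕋 aⁿ āᵐ da = δₙₘ` of the
characters of the circle, its integral over `𝕋^N` is `1` if `m(i) = m(j)`, i.e. `[i] = [j]`,
and `0` otherwise.
-/

@[fun_prop]
lemma continuous_e : Continuous e := by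
  unfold e; fun_prop

lemma conj_e (u : ℝ) : starRingEnd ℂ (e u) = e (-u) := by
  rw [e, ← Complex.exp_conj]; simp [e, map_ofNat]

lemma e_pow_mul_conj_pow (u : ℝ) (m n : ℕ) :
    e u ^ m * starRingEnd ℂ (e u) ^ n
      = Complex.exp (((m - n : ℤ) * (2 * Real.pi * Complex.I)) * u) := by
  rw [conj_e, e, e, ← Complex.exp_nat_mul, ← Complex.exp_nat_mul, ← Complex.exp_add]
  push_cast; ring_nf

lemma integral_Icc_exp_int_mul (k : ℤ) :
    ∫ u in Set.Icc (0 : ℝ) 1, Complex.exp ((k * (2 * Real.pi * Complex.I)) * u)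
      = if k = 0 then 1 else 0 := by
  split_ifs with hk
  · simp [hk]
  have hc : (k : ℂ) * (2 * Real.pi * Complex.I) ≠ 0 := by simp [hk, Real.pi_ne_zero]
  rw [integral_Icc_eq_integral_Ioc, ← intervalIntegral.integral_of_le zero_le_one,
    integral_exp_mul_complex hc]
  simp [Complex.exp_int_mul_two_pi_mul_I]

lemma integral_Icc_e_pow_mul_conj_pow (m n : ℕ) :
    ∫ u in Set.Icc (0 : ℝ) 1, e u ^ m * starRingEnd ℂ (e u) ^ n = if m = n then 1 else 0 := by
  simp_rw [e_pow_mul_conj_pow, integral_Icc_exp_int_mul, sub_eq_zero, Nat.cast_inj]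

lemma integral_box_prod_e_pow_mul_conj_pow {N : ℕ} (m n : Fin N → ℕ) :
    ∫ t in Box N, ∏ k, e (t k) ^ m k * starRingEnd ℂ (e (t k)) ^ n k
      = if m = n then 1 else 0 := by
  rw [Box, volume_pi, Measure.restrict_pi_pi,
    integral_fintype_prod_eq_prod (fun k u => e u ^ m k * starRingEnd ℂ (e u) ^ n k)]
  simp_rw [integral_Icc_e_pow_mul_conj_pow, prod_boole, mem_univ, true_implies, funext_iff]

lemma prod_comp_eq_prod_pow_count {α ι M : Type*} [Fintype α] [Fintype ι] [DecidableEq ι]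
    [CommMonoid M] (i : α → ι) (x : ι → M) :
    ∏ a, x (i a) = ∏ k, x k ^ (univ.val.map i).count k := by
  rw [← prod_fiberwise' univ i x]
  refine prod_congr rfl fun k _ => ?_
  rw [prod_const, Multiset.count_map, ← filter_val]
  simp_rw [eq_comm]
  rfl

lemma integral_box_prod_mul_conj_prod {α : Type*} [Fintype α] {N : ℕ} (i j : α → Fin N) :
    ∫ t in Box N, (∏ a, e (t (i a))) * starRingEnd ℂ (∏ a, e (t (j a)))
      = if univ.val.map i = univ.val.map j then 1 else 0 := by
  have multiplicities (t : Fin N → ℝ) :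
      (∏ a, e (t (i a))) * starRingEnd ℂ (∏ a, e (t (j a)))
        = ∏ k, e (t k) ^ (univ.val.map i).count k
            * starRingEnd ℂ (e (t k)) ^ (univ.val.map j).count k := by
    rw [map_prod, prod_comp_eq_prod_pow_count i (fun k => e (t k)),
      prod_comp_eq_prod_pow_count j (fun k => starRingEnd ℂ (e (t k))), prod_mul_distrib]
  simp_rw [multiplicities, integral_box_prod_e_pow_mul_conj_pow, Multiset.ext, funext_iff]

lemma norm_sum_pow_two_mul {ι : Type*} [Fintype ι] (x : ι → ℂ) (p : ℕ) :
    ((‖∑ k, x k‖ ^ (2 * p) : ℝ) : ℂ)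
      = ∑ i : Fin p → ι, ∑ j : Fin p → ι, (∏ a, x (i a)) * starRingEnd ℂ (∏ a, x (j a)) := by
  rw [pow_mul, Complex.ofReal_pow, Complex.ofReal_pow, ← Complex.mul_conj', mul_pow, ← map_pow,
    Fintype.sum_pow, map_sum, sum_mul_sum]

theorem count_multiset_pairs_eq_torus_integral_general (p N : ℕ) :
    ((Finset.univ.filter (fun ij : (Fin p → Fin N) × (Fin p → Fin N) =>
        Finset.univ.val.map ij.1 = Finset.univ.val.map ij.2)).card : ℝ) =
      ∫ t in Box N, ‖∑ k, e (t k)‖ ^ (2 * p) := by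
  have integrable (i j : Fin p → Fin N) :
      IntegrableOn (fun t => (∏ a, e (t (i a))) * starRingEnd ℂ (∏ a, e (t (j a)))) (Box N) :=
    (by fun_prop : Continuous _).continuousOn.integrableOn_compact
      (isCompact_univ_pi fun _ => isCompact_Icc)
  rw [← Complex.ofReal_inj, ← integral_complex_ofReal]
  simp_rw [norm_sum_pow_two_mul]
  rw [integral_finsetSum _ fun i _ => integrable_finsetSum _ fun j _ => integrable i j,
    card_filter, Fintype.sum_prod_type]
  push_cast
  refine sum_congr rfl fun i _ => ?_
  rw [integral_finsetSum _ fun j _ => integrable i j]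
  refine sum_congr rfl fun j _ => ?_
  rw [integral_box_prod_mul_conj_prod]
  norm_cast

/-- The number of pairs of multi-indices `i, j ∈ {1,…,N}^p` that are equal as
multisets equals the integral `∫_{𝕋^N} |a₁ + ⋯ + a_N|^{2p} da` over the Haar
probability measure on `𝕋^N`. -/
theorem count_multiset_pairs_eq_torus_integral (p N : ℕ) (hp : 1 ≤ p) (hN : 1 ≤ N) :
    ((Finset.univ.filter (fun ij : (Fin p → Fin N) × (Fin p → Fin N) =>
        Finset.univ.val.map ij.1 = Finset.univ.val.map ij.2)).card : ℝ) =
      ∫ t in Box N, ‖∑ k, e (t k)‖ ^ (2 * p) :=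
  count_multiset_pairs_eq_torus_integral_general p N
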